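/- arXiv:1709.01391 — 2 statements merged into one kernel-verified Lean document; each statement's English description precedes it below -/
import Mathlib

section
/- Let L be a finite-dimensional solvable left Leibniz algebra and M a self-normalizing maximal subalgebra of L with core N (the maximal ideal of L contained in M). Then L/N contains a unique minimal ideal A/N. -/
set_option linter.unnecessarySimpa false

/-- The left Leibniz identity for a bilinear bracket `B`. -/
def LeibnizId {F L : Type*} [Field F] [AddCommGroup L] [Module F L]
    (B : L →ₗ[F] L →ₗ[F] L) : Prop :=
  ∀ a b c : L, B a (B b c) = B (B a b) c + B b (B a c)

/-- The span of all brackets `[s,t]` with `s ∈ S`, `t ∈ T`. -/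
def lbrk {F L : Type*} [Field F] [AddCommGroup L] [Module F L]
    (B : L →ₗ[F] L →ₗ[F] L) (S T : Submodule F L) : Submodule F L :=
  Submodule.span F {z : L | ∃ s ∈ S, ∃ t ∈ T, z = B s t}

/-- A subspace closed under the bracket. -/
def IsLeibSubalg {F L : Type*} [Field F] [AddCommGroup L] [Module F L]
    (B : L →ₗ[F] L →ₗ[F] L) (S : Submodule F L) : Prop :=
  ∀ x ∈ S, ∀ y ∈ S, B x y ∈ S

/-- A (two-sided) ideal. -/
def IsLeibIdeal {F L : Type*} [Field F] [AddCommGroup L] [Module F L]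
    (B : L →ₗ[F] L →ₗ[F] L) (S : Submodule F L) : Prop :=
  (∀ x : L, ∀ y ∈ S, B x y ∈ S) ∧ (∀ y ∈ S, ∀ x : L, B y x ∈ S)

/-- Lower central series: `L^1 = L`, `L^{n+1} = [L, L^n]`. -/
def leibLCS {F L : Type*} [Field F] [AddCommGroup L] [Module F L]
    (B : L →ₗ[F] L →ₗ[F] L) : ℕ → Submodule F L
  | 0 => ⊤
  | n + 1 => lbrk B ⊤ (leibLCS B n)

def LeibIsNilpotent {F L : Type*} [Field F] [AddCommGroup L] [Module F L]
    (B : L →ₗ[F] L →ₗ[F] L) : Prop :=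
  ∃ n, leibLCS B n = ⊥

/-- Lower central series of a subalgebra `S`. -/
def leibLCSIn {F L : Type*} [Field F] [AddCommGroup L] [Module F L]
    (B : L →ₗ[F] L →ₗ[F] L) (S : Submodule F L) : ℕ → Submodule F L
  | 0 => S
  | n + 1 => lbrk B S (leibLCSIn B S n)

/-- A subalgebra `S` is nilpotent (as an algebra in its own right). -/
def LeibSubalgNilpotent {F L : Type*} [Field F] [AddCommGroup L] [Module F L]
    (B : L →ₗ[F] L →ₗ[F] L) (S : Submodule F L) : Prop :=
  ∃ n, leibLCSIn B S n = ⊥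

/-- Derived series. -/
def leibDerived {F L : Type*} [Field F] [AddCommGroup L] [Module F L]
    (B : L →ₗ[F] L →ₗ[F] L) : ℕ → Submodule F L
  | 0 => ⊤
  | n + 1 => lbrk B (leibDerived B n) (leibDerived B n)

def LeibIsSolvable {F L : Type*} [Field F] [AddCommGroup L] [Module F L]
    (B : L →ₗ[F] L →ₗ[F] L) : Prop :=
  ∃ n, leibDerived B n = ⊥

/-- The normalizer of a subspace `S`: elements `x` with `[x,S] ⊆ S` and `[S,x] ⊆ S`. -/
def leibNormalizer {F L : Type*} [Field F] [AddCommGroup L] [Module F L]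
    (B : L →ₗ[F] L →ₗ[F] L) (S : Submodule F L) : Submodule F L where
  carrier := {x : L | ∀ m ∈ S, B x m ∈ S ∧ B m x ∈ S}
  add_mem' := by
    intro x y hx hy m hm
    constructor
    · have := S.add_mem (hx m hm).1 (hy m hm).1
      simpa [map_add] using this
    · have := S.add_mem (hx m hm).2 (hy m hm).2
      simpa [map_add] using this
  zero_mem' := by
    intro m hm
    constructor
    · simpa [map_zero] using S.zero_mem
    · simpa [map_zero] using S.zero_mem
  smul_mem' := by
    intro c x hx m hm
    constructor
    · have := S.smul_mem c (hx m hm).1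
      simpa [map_smul] using this
    · have := S.smul_mem c (hx m hm).2
      simpa [map_smul] using this

/-- `Leib(L)`: the span of all squares. -/
def leibLeib {F L : Type*} [Field F] [AddCommGroup L] [Module F L]
    (B : L →ₗ[F] L →ₗ[F] L) : Submodule F L :=
  Submodule.span F {z : L | ∃ y : L, z = B y y}

/-- A maximal (proper) subalgebra. -/
def IsMaxSubalg {F L : Type*} [Field F] [AddCommGroup L] [Module F L]
    (B : L →ₗ[F] L →ₗ[F] L) (S : Submodule F L) : Prop :=
  IsLeibSubalg B S ∧ S ≠ ⊤ ∧ ∀ T : Submodule F L, IsLeibSubalg B T → S < T → T = ⊤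

/-- `N` is the core of `M`: the largest ideal of `L` contained in `M`. -/
def IsCore {F L : Type*} [Field F] [AddCommGroup L] [Module F L]
    (B : L →ₗ[F] L →ₗ[F] L) (M N : Submodule F L) : Prop :=
  IsLeibIdeal B N ∧ N ≤ M ∧ ∀ C : Submodule F L, IsLeibIdeal B C → C ≤ M → C ≤ N

/-- Minimal nonnilpotent: nonnilpotent, solvable, all proper subalgebras nilpotent. -/
def MinNonnilpotent {F L : Type*} [Field F] [AddCommGroup L] [Module F L]
    (B : L →ₗ[F] L →ₗ[F] L) : Prop :=
  ¬ LeibIsNilpotent B ∧ LeibIsSolvable B ∧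
    ∀ S : Submodule F L, IsLeibSubalg B S → S ≠ ⊤ → LeibSubalgNilpotent B S

/-- Cyclic: generated as an algebra by a single element. -/
def LeibCyclic {F L : Type*} [Field F] [AddCommGroup L] [Module F L]
    (B : L →ₗ[F] L →ₗ[F] L) : Prop :=
  ∃ z : L, ∀ S : Submodule F L, IsLeibSubalg B S → z ∈ S → S = ⊤


section Helpers

variable {F L : Type*} [Field F] [AddCommGroup L] [Module F L]
variable (B : L →ₗ[F] L →ₗ[F] L)

lemma lbrk_le {S T U : Submodule F L} (h : ∀ s ∈ S, ∀ t ∈ T, B s t ∈ U) :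
    lbrk B S T ≤ U := by
  apply Submodule.span_le.2
  rintro z ⟨s, hs, t, ht, rfl⟩
  exact h s hs t ht

lemma mem_lbrk {S T : Submodule F L} {s t : L} (hs : s ∈ S) (ht : t ∈ T) :
    B s t ∈ lbrk B S T :=
  Submodule.subset_span ⟨s, hs, t, ht, rfl⟩

lemma lbrk_mono {S T S' T' : Submodule F L} (hS : S ≤ S') (hT : T ≤ T') :
    lbrk B S T ≤ lbrk B S' T' :=
  lbrk_le B fun s hs t ht => mem_lbrk B (hS hs) (hT ht)

/-- To verify a property of elements of `lbrk` which is expressed as `f d ∈ U` for a linear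
map `f`, it suffices to check generators. -/
lemma lbrk_closed {S T U : Submodule F L} (f : L →ₗ[F] L)
    (h : ∀ s ∈ S, ∀ t ∈ T, f (B s t) ∈ U) : ∀ d ∈ lbrk B S T, f d ∈ U := fun d hd =>
  Submodule.mem_comap.1 ((lbrk_le B (U := Submodule.comap f U) fun s hs t ht =>
    Submodule.mem_comap.2 (h s hs t ht)) hd)

lemma lbrk_sup_right {P Q N : Submodule F L} (hN : IsLeibIdeal B N) :
    lbrk B (P ⊔ N) (Q ⊔ N) ≤ lbrk B P Q ⊔ N := by
  apply lbrk_le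
  intro s hs t ht
  rcases Submodule.mem_sup.1 hs with ⟨p, hp, n, hn, rfl⟩
  rcases Submodule.mem_sup.1 ht with ⟨q, hq, n', hn', rfl⟩
  have expand : B (p + n) (q + n') = B p q + (B p n' + (B n q + B n n')) := by
    simp [map_add]; abel
  rw [expand]
  refine Submodule.add_mem _ (Submodule.mem_sup_left (mem_lbrk B hp hq))
    (Submodule.mem_sup_right (Submodule.add_mem _ (hN.1 p n' hn')
      (Submodule.add_mem _ (hN.2 n hn q) (hN.1 n n' hn'))))

lemma ideal_top : IsLeibIdeal B (⊤ : Submodule F L) :=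
  ⟨fun _ _ _ => Submodule.mem_top, fun _ _ _ => Submodule.mem_top⟩

lemma ideal_inf {A C : Submodule F L} (hA : IsLeibIdeal B A) (hC : IsLeibIdeal B C) :
    IsLeibIdeal B (A ⊓ C) :=
  ⟨fun x y hy => ⟨hA.1 x y hy.1, hC.1 x y hy.2⟩,
   fun y hy x => ⟨hA.2 y hy.1 x, hC.2 y hy.2 x⟩⟩

lemma ideal_sup {A C : Submodule F L} (hA : IsLeibIdeal B A) (hC : IsLeibIdeal B C) :
    IsLeibIdeal B (A ⊔ C) := by
  constructor
  · intro x y hy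
    rcases Submodule.mem_sup.1 hy with ⟨a, ha, c, hc, rfl⟩
    rw [map_add]
    exact Submodule.add_mem _ (Submodule.mem_sup_left (hA.1 x a ha))
      (Submodule.mem_sup_right (hC.1 x c hc))
  · intro y hy x
    rcases Submodule.mem_sup.1 hy with ⟨a, ha, c, hc, rfl⟩
    have : B (a + c) x = B a x + B c x := by simp [map_add]
    rw [this]
    exact Submodule.add_mem _ (Submodule.mem_sup_left (hA.2 a ha x))
      (Submodule.mem_sup_right (hC.2 c hc x))

lemma subalg_sup_ideal {M A : Submodule F L} (hM : IsLeibSubalg B M) (hA : IsLeibIdeal B A) :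
    IsLeibSubalg B (M ⊔ A) := by
  intro x hx y hy
  rcases Submodule.mem_sup.1 hx with ⟨m, hm, a, ha, rfl⟩
  rcases Submodule.mem_sup.1 hy with ⟨m', hm', a', ha', rfl⟩
  have expand : B (m + a) (m' + a') = B m m' + (B m a' + (B a m' + B a a')) := by
    simp [map_add]; abel
  rw [expand]
  exact Submodule.add_mem _ (Submodule.mem_sup_left (hM m hm m' hm'))
    (Submodule.mem_sup_right (Submodule.add_mem _ (hA.1 m a' ha')
      (Submodule.add_mem _ (hA.2 a ha m') (hA.1 a a' ha'))))

/-- A minimal ideal over `N` in a solvable Leibniz algebra is abelian modulo `N`. -/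
lemma abelian_of_min (hB : LeibnizId B) (hsolv : LeibIsSolvable B)
    {N A : Submodule F L} (hNId : IsLeibIdeal B N) (hAId : IsLeibIdeal B A) (hNA : N < A)
    (hmin : ∀ C : Submodule F L, IsLeibIdeal B C → N < C → C ≤ A → C = A) :
    lbrk B A A ≤ N := by
  set D := lbrk B A A ⊔ N with hD
  have hDA : D ≤ A := sup_le (lbrk_le B fun s hs t _ => hAId.2 s hs t) hNA.le
  have hDideal : IsLeibIdeal B D := by
    constructor
    · intro x y hy
      rcases Submodule.mem_sup.1 hy with ⟨d, hd, n, hn, rfl⟩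
      rw [map_add]
      refine Submodule.add_mem _ ?_ (Submodule.mem_sup_right (hNId.1 x n hn))
      refine lbrk_closed B (B x) ?_ d hd
      intro s hs t ht
      rw [hB x s t]
      exact Submodule.add_mem _ (Submodule.mem_sup_left (mem_lbrk B (hAId.1 x s hs) ht))
        (Submodule.mem_sup_left (mem_lbrk B hs (hAId.1 x t ht)))
    · intro y hy x
      rcases Submodule.mem_sup.1 hy with ⟨d, hd, n, hn, rfl⟩
      have : B (d + n) x = B d x + B n x := by simp [map_add]
      rw [this]
      refine Submodule.add_mem _ ?_ (Submodule.mem_sup_right (hNId.2 n hn x))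
      refine lbrk_closed B (B.flip x) ?_ d hd
      intro s hs t ht
      have h1 : B.flip x (B s t) = B s (B t x) - B t (B s x) := by
        have := hB s t x
        simp only [LinearMap.flip_apply]
        rw [this]; abel
      rw [h1]
      exact Submodule.sub_mem _ (Submodule.mem_sup_left (mem_lbrk B hs (hAId.2 t ht x)))
        (Submodule.mem_sup_left (mem_lbrk B ht (hAId.2 s hs x)))
  by_cases hDN : D ≤ N
  · exact le_trans le_sup_left hDN
  · exfalso
    have hNltD : N < D := lt_of_le_of_ne le_sup_right fun h => hDN h.ge
    have hDeqA : D = A := hmin D hDideal hNltD hDA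
    have key : ∀ k, A ≤ leibDerived B k ⊔ N := by
      intro k
      induction k with
      | zero =>
        simp only [leibDerived]
        exact le_trans le_top le_sup_left
      | succ k ih =>
        have h1 : A = lbrk B A A ⊔ N := hDeqA.symm
        calc A = lbrk B A A ⊔ N := h1
        _ ≤ lbrk B (leibDerived B k ⊔ N) (leibDerived B k ⊔ N) ⊔ N :=
            sup_le_sup_right (lbrk_mono B ih ih) N
        _ ≤ (lbrk B (leibDerived B k) (leibDerived B k) ⊔ N) ⊔ N :=
            sup_le_sup_right (lbrk_sup_right B hNId) N
        _ = leibDerived B (k + 1) ⊔ N := by rw [sup_assoc, sup_idem]; rfl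
    obtain ⟨n, hn⟩ := hsolv
    have : A ≤ N := by simpa [hn] using key n
    exact hNA.not_ge this

lemma inf_eq_of_abelian {M N A : Submodule F L} (hMsub : IsLeibSubalg B M)
    (hMA : M ⊔ A = ⊤) (hAId : IsLeibIdeal B A) (hab : lbrk B A A ≤ N)
    (hNM : N ≤ M) (hNA : N ≤ A)
    (hNcore : ∀ C : Submodule F L, IsLeibIdeal B C → C ≤ M → C ≤ N) : M ⊓ A = N := by
  have hIdeal : IsLeibIdeal B (M ⊓ A) := by
    constructor
    · intro x y hy
      have hx : x ∈ M ⊔ A := hMA.ge Submodule.mem_top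
      rcases Submodule.mem_sup.1 hx with ⟨m, hm, a, ha, rfl⟩
      have hexp : B (m + a) y = B m y + B a y := by simp [map_add]
      rw [hexp]
      refine Submodule.add_mem _ ⟨hMsub m hm y hy.1, hAId.1 m y hy.2⟩ ?_
      have hn : B a y ∈ N := hab (mem_lbrk B ha hy.2)
      exact ⟨hNM hn, hNA hn⟩
    · intro y hy x
      have hx : x ∈ M ⊔ A := hMA.ge Submodule.mem_top
      rcases Submodule.mem_sup.1 hx with ⟨m, hm, a, ha, rfl⟩
      have hexp : B y (m + a) = B y m + B y a := map_add _ _ _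
      rw [hexp]
      refine Submodule.add_mem _ ⟨hMsub y hy.1 m hm, hAId.2 y hy.2 m⟩ ?_
      have hn : B y a ∈ N := hab (mem_lbrk B hy.2 ha)
      exact ⟨hNM hn, hNA hn⟩
  exact le_antisymm (hNcore _ hIdeal inf_le_left) (le_inf hNM hNA)

lemma exists_minimal [FiniteDimensional F L] {N : Submodule F L} (hN : N ≠ ⊤) :
    ∃ A : Submodule F L, IsLeibIdeal B A ∧ N < A ∧
      ∀ C : Submodule F L, IsLeibIdeal B C → N < C → C ≤ A → C = A := by
  have key : ∀ n : ℕ, ∀ A : Submodule F L, Module.finrank F A ≤ n → IsLeibIdeal B A → N < A →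
      ∃ A' : Submodule F L, IsLeibIdeal B A' ∧ N < A' ∧
        ∀ C : Submodule F L, IsLeibIdeal B C → N < C → C ≤ A' → C = A' := by
    intro n
    induction n with
    | zero =>
      intro A hA _ hNA
      have hbot : A = ⊥ := Submodule.finrank_eq_zero.1 (Nat.le_zero.1 hA)
      exact absurd (hbot ▸ hNA) (by simp)
    | succ n ih =>
      intro A hA hAId hNA
      by_cases h : ∀ C : Submodule F L, IsLeibIdeal B C → N < C → C ≤ A → C = A
      · exact ⟨A, hAId, hNA, h⟩
      · push_neg at h
        obtain ⟨C, hCId, hNC, hCA, hCne⟩ := h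
        have hlt : Module.finrank F C < Module.finrank F A :=
          Submodule.finrank_lt_finrank_of_lt (lt_of_le_of_ne hCA hCne)
        exact ih C (by omega) hCId hNC
  exact key (Module.finrank F (⊤ : Submodule F L)) ⊤ le_rfl (ideal_top B)
    (lt_top_iff_ne_top.2 hN)

end Helpers

/-- if `L` is finite-dimensional solvable, `M` a self-normalizing maximal
subalgebra with core `N`, then `L/N` has a unique minimal ideal `A/N`; equivalently, there is
a unique ideal `A` of `L` with `N < A` which is minimal among ideals strictly containing `N`. -/
theorem stmt2 {F L : Type*} [Field F] [AddCommGroup L] [Module F L] [FiniteDimensional F L]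
    (B : L →ₗ[F] L →ₗ[F] L) (hB : LeibnizId B) (hsolv : LeibIsSolvable B)
    (M N : Submodule F L) (hM : IsMaxSubalg B M) (hself : leibNormalizer B M = M)
    (hN : IsCore B M N) :
    ∃! A : Submodule F L, IsLeibIdeal B A ∧ N < A ∧
      ∀ C : Submodule F L, IsLeibIdeal B C → N < C → C ≤ A → C = A := by
  obtain ⟨hMsub, hMne, hMmax⟩ := hM
  obtain ⟨hNId, hNM, hNcore⟩ := hN
  have hNne : N ≠ ⊤ := fun h => hMne (top_le_iff.1 (h ▸ hNM))
  obtain ⟨A, hAId, hNA, hAmin⟩ := exists_minimal B hNne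
  refine ⟨A, ⟨hAId, hNA, hAmin⟩, ?_⟩
  rintro A' ⟨hA'Id, hNA', hA'min⟩
  by_contra hne
  have habA : lbrk B A A ≤ N := abelian_of_min B hB hsolv hNId hAId hNA hAmin
  have hsup : ∀ X : Submodule F L, IsLeibIdeal B X → N < X → M ⊔ X = ⊤ := by
    intro X hXId hNX
    have hXnotM : ¬ X ≤ M := fun h => hNX.not_ge (hNcore X hXId h)
    refine hMmax _ (subalg_sup_ideal B hMsub hXId) (lt_of_le_of_ne le_sup_left ?_)
    intro h
    exact hXnotM (by rw [h]; exact le_sup_right)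
  have hMA : M ⊔ A = ⊤ := hsup A hAId hNA
  have hNinf : N ≤ A ⊓ A' := le_inf hNA.le hNA'.le
  have hinf : A ⊓ A' = N := by
    rcases eq_or_lt_of_le hNinf with h | h
    · exact h.symm
    · exfalso
      have h1 : A ⊓ A' = A := hAmin _ (ideal_inf B hAId hA'Id) h inf_le_left
      have h2 : A ≤ A' := h1 ▸ inf_le_right
      exact hne (hA'min A hAId hNA h2).symm
  have hMinfA : M ⊓ A = N := inf_eq_of_abelian B hMsub hMA hAId habA hNM hNA.le hNcore
  have hsupId : IsLeibIdeal B (A ⊔ A') := ideal_sup B hAId hA'Id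
  have hNsub : N ≤ A ⊔ A' := le_trans hNA.le le_sup_left
  have hC : (A ⊔ A') ⊓ M = N := by
    have hCin : ∀ a1 ∈ A, ∀ y ∈ A ⊔ A', B a1 y ∈ N ∧ B y a1 ∈ N := by
      intro a1 ha1 y hy
      rcases Submodule.mem_sup.1 hy with ⟨a, ha, a', ha', rfl⟩
      constructor
      · have hexp : B a1 (a + a') = B a1 a + B a1 a' := map_add _ _ _
        rw [hexp]
        refine Submodule.add_mem _ (habA (mem_lbrk B ha1 ha)) ?_
        have hmem : B a1 a' ∈ A ⊓ A' := ⟨hAId.2 a1 ha1 a', hA'Id.1 a1 a' ha'⟩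
        rw [hinf] at hmem; exact hmem
      · have hexp : B (a + a') a1 = B a a1 + B a' a1 := by simp [map_add]
        rw [hexp]
        refine Submodule.add_mem _ (habA (mem_lbrk B ha ha1)) ?_
        have hmem : B a' a1 ∈ A ⊓ A' := ⟨hAId.1 a' a1 ha1, hA'Id.2 a' ha' a1⟩
        rw [hinf] at hmem; exact hmem
    have hId : IsLeibIdeal B ((A ⊔ A') ⊓ M) := by
      constructor
      · intro x y hy
        have hx : x ∈ M ⊔ A := hMA.ge Submodule.mem_top
        rcases Submodule.mem_sup.1 hx with ⟨m, hm, a1, ha1, rfl⟩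
        have hexp : B (m + a1) y = B m y + B a1 y := by simp [map_add]
        rw [hexp]
        refine Submodule.add_mem _ ⟨hsupId.1 m y hy.1, hMsub m hm y hy.2⟩ ?_
        have hn : B a1 y ∈ N := (hCin a1 ha1 y hy.1).1
        exact ⟨hNsub hn, hNM hn⟩
      · intro y hy x
        have hx : x ∈ M ⊔ A := hMA.ge Submodule.mem_top
        rcases Submodule.mem_sup.1 hx with ⟨m, hm, a1, ha1, rfl⟩
        have hexp : B y (m + a1) = B y m + B y a1 := map_add _ _ _
        rw [hexp]
        refine Submodule.add_mem _ ⟨hsupId.2 y hy.1 m, hMsub y hy.2 m hm⟩ ?_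
        have hn : B y a1 ∈ N := (hCin a1 ha1 y hy.1).2
        exact ⟨hNsub hn, hNM hn⟩
    exact le_antisymm (hNcore _ hId inf_le_right) (le_inf hNsub hNM)
  have htop2 : (A ⊔ A') ⊔ M = ⊤ := by
    refine eq_top_iff.2 ?_
    rw [← hMA]
    exact sup_le le_sup_right (le_trans le_sup_left le_sup_left)
  have e2 := Submodule.finrank_sup_add_finrank_inf_eq (A ⊔ A') M
  have e3 := Submodule.finrank_sup_add_finrank_inf_eq M A
  rw [htop2, hC] at e2
  rw [hMA, hMinfA] at e3
  have hfr : Module.finrank F ↥(A ⊔ A') = Module.finrank F ↥A := by omega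
  have heq : A = A ⊔ A' := Submodule.eq_of_le_of_finrank_le le_sup_left hfr.le
  have hA'leA : A' ≤ A := by rw [heq]; exact le_sup_right
  exact hne (hAmin A' hA'Id hNA' hA'leA)
end

section
/- Let L be a finite-dimensional minimal nonnilpotent left Leibniz algebra. Then there exists x ∈ L and a₀,...,a_k ∈ L such that [x,aᵢ] = a_{i+1} for 0 ≤ i < k and [x,a_k] = c₀a₀ + ⋯ + c_k a_k with c₀ ≠ 0, and the polynomial p(λ) = λ^{k+1} − c_kλ^k − ⋯ − c₁λ − c₀ is irreducible over the base field. -/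
/-!
By Engel's theorem some left multiplication `T = B x` is not nilpotent: the Leibniz identity says
`⁅B a, B b⁆ = B (B a b)`, so the left multiplications form a Lie algebra of endomorphisms, and the
lower central series of `L` lies in that of `L` as a module over it.

The minimal polynomial of `T` is not a power of `X`, so it has a monic irreducible factor `p` with
`p(0) ≠ 0`, and `p(T)` kills some `v ≠ 0`. A nonzero `q` of degree `< deg p` is coprime to `p`, so
`q(T) v ≠ 0`: hence `v, T v, …, T^k v` (with `k + 1 = deg p`) are independent, and `p(T) v = 0`
expresses `T^(k+1) v` through them with coefficients `-p.coeff i`.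
-/

set_option linter.unnecessarySimpa false

open Polynomial

namespace Module.End

variable {F V : Type*} [Field F] [AddCommGroup V] [Module F V]

lemma exists_ne_zero_aeval_apply_eq_zero_of_dvd_minpoly [FiniteDimensional F V]
    (T : Module.End F V) {p : F[X]} (hp : p.Monic) (hpu : ¬ IsUnit p) (hpm : p ∣ minpoly F T) :
    ∃ v : V, v ≠ 0 ∧ aeval T p v = 0 := by
  obtain ⟨s, hs⟩ := hpm
  have hint : IsIntegral F T := LinearMap.isIntegral T
  have hs_monic : s.Monic := hp.of_mul_monic_left (hs ▸ minpoly.monic hint)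
  -- `s` is a proper divisor of the minimal polynomial, so `s(T) ≠ 0`; its image is killed by `p(T)`.
  have hsT : aeval T s ≠ 0 := minpoly.aeval_ne_zero_of_dvdNotUnit_minpoly hint hs_monic
    ⟨hs_monic.ne_zero, p, hpu, by rw [hs, mul_comm]⟩
  obtain ⟨w, hw⟩ : ∃ w, aeval T s w ≠ 0 := by
    by_contra! h
    exact hsT (LinearMap.ext h)
  refine ⟨aeval T s w, hw, ?_⟩
  rw [← Module.End.mul_apply, ← map_mul, ← hs, minpoly.aeval, LinearMap.zero_apply]

lemma exists_monic_irreducible_dvd_minpoly_of_not_isNilpotent [FiniteDimensional F V]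
    {T : Module.End F V} (hT : ¬ IsNilpotent T) :
    ∃ p : F[X], p.Monic ∧ Irreducible p ∧ p ∣ minpoly F T ∧ p.coeff 0 ≠ 0 := by
  obtain ⟨s, hms, hXs⟩ := (minpoly F T).exists_eq_pow_rootMultiplicity_mul_and_not_dvd
    (minpoly.ne_zero (LinearMap.isIntegral T)) 0
  rw [map_zero, sub_zero] at hms hXs
  have hsu : ¬ IsUnit s := by
    intro hsu
    have hdvd : minpoly F T ∣ X ^ rootMultiplicity 0 (minpoly F T) := by
      conv_lhs => rw [hms]
      exact hsu.mul_right_dvd.mpr dvd_rfl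
    refine hT ⟨rootMultiplicity 0 (minpoly F T), ?_⟩
    simpa only [map_pow, aeval_X] using aeval_eq_zero_of_dvd_aeval_eq_zero hdvd (minpoly.aeval F T)
  obtain ⟨p, hp, hirr, hps⟩ := exists_monic_irreducible_factor s hsu
  exact ⟨p, hp, hirr, hps.trans ⟨_, hms.trans (mul_comm _ _)⟩,
    fun h => hXs ((X_dvd_iff.mpr h).trans hps)⟩

lemma eq_zero_of_aeval_apply_eq_zero_of_degree_lt (T : Module.End F V) {p q : F[X]}
    (hp : Irreducible p) {v : V} (hv : v ≠ 0) (hpv : aeval T p v = 0) (hqv : aeval T q v = 0)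
    (hq : q.degree < p.degree) : q = 0 := by
  by_contra hq0
  have hpq : IsCoprime p q :=
    hp.coprime_iff_not_dvd.mpr fun h => (degree_le_of_dvd h hq0).not_gt hq
  exact hv (Submodule.disjoint_def.mp (disjoint_ker_aeval_of_isCoprime T hpq) v hpv hqv)

lemma linearIndependent_pow_apply_of_irreducible (T : Module.End F V) {p : F[X]}
    (hp : Irreducible p) {v : V} (hv : v ≠ 0) (hpv : aeval T p v = 0) {n : ℕ}
    (hn : n ≤ p.natDegree) : LinearIndependent F (fun i : Fin n => (T ^ (i : ℕ)) v) := by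
  let ev : F[X] →ₗ[F] V := LinearMap.applyₗ v ∘ₗ (aeval T).toLinearMap
  have hX : LinearIndependent F (fun i : Fin n => (X ^ (i : ℕ) : F[X])) := by
    simpa [coe_basisMonomials, X_pow_eq_monomial, Function.comp_def] using
      (basisMonomials F).linearIndependent.comp _ Fin.val_injective
  have hdisj : Disjoint (Submodule.span F (Set.range fun i : Fin n => (X ^ (i : ℕ) : F[X])))
      (LinearMap.ker ev) := by
    rw [Submodule.disjoint_def]
    intro q hq hqv
    refine eq_zero_of_aeval_apply_eq_zero_of_degree_lt T hp hv hpv hqv ?_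
    have hspan : Submodule.span F (Set.range fun i : Fin n => (X ^ (i : ℕ) : F[X])) ≤
        degreeLT F n := by
      rw [Submodule.span_le]
      rintro _ ⟨i, rfl⟩
      rw [SetLike.mem_coe, mem_degreeLT, degree_X_pow]
      exact_mod_cast i.isLt
    calc q.degree < n := mem_degreeLT.mp (hspan hq)
      _ ≤ p.natDegree := by exact_mod_cast hn
      _ = p.degree := (degree_eq_natDegree hp.ne_zero).symm
  simpa [ev, Function.comp_def] using hX.map hdisj

lemma exists_linearIndependent_pow_apply_of_not_isNilpotent [FiniteDimensional F V]
    {T : Module.End F V} (hT : ¬ IsNilpotent T) :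
    ∃ (k : ℕ) (v : V) (c : ℕ → F),
      LinearIndependent F (fun i : Fin (k + 1) => (T ^ (i : ℕ)) v) ∧
      (T ^ (k + 1)) v = ∑ i ∈ Finset.range (k + 1), c i • (T ^ i) v ∧
      c 0 ≠ 0 ∧
      Irreducible (X ^ (k + 1) - ∑ i ∈ Finset.range (k + 1), C (c i) * X ^ i : F[X]) := by
  obtain ⟨p, hp, hirr, hpm, hp0⟩ := exists_monic_irreducible_dvd_minpoly_of_not_isNilpotent hT
  obtain ⟨v, hv, hpv⟩ :=
    exists_ne_zero_aeval_apply_eq_zero_of_dvd_minpoly T hp hirr.not_isUnit hpm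
  obtain ⟨k, hk⟩ : ∃ k, p.natDegree = k + 1 := Nat.exists_eq_add_one.mpr hirr.natDegree_pos
  have hp_eq : X ^ (k + 1) - ∑ i ∈ Finset.range (k + 1), C (-p.coeff i) * X ^ i = p := by
    conv_rhs => rw [hp.as_sum, hk]
    simp only [map_neg, neg_mul, Finset.sum_neg_distrib, sub_neg_eq_add]
  refine ⟨k, v, fun i => -p.coeff i, linearIndependent_pow_apply_of_irreducible T hirr hv hpv hk.ge,
    ?_, neg_ne_zero.mpr hp0, by rwa [hp_eq]⟩
  rw [← hp_eq] at hpv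
  simpa [eq_neg_iff_add_eq_zero, LinearMap.sum_apply, Module.algebraMap_end_apply] using hpv

end Module.End

section Engel

attribute [local instance] LieRing.ofAssociativeRing

variable {F L : Type*} [Field F] [AddCommGroup L] [Module F L] {B : L →ₗ[F] L →ₗ[F] L}

lemma LeibnizId.lie_apply_eq (hB : LeibnizId B) (a b : L) : ⁅B a, B b⁆ = B (B a b) := by
  ext c
  rw [Ring.lie_def, LinearMap.sub_apply, Module.End.mul_apply, Module.End.mul_apply, hB a b c]
  abel

def LeibnizId.leftMulLieSubalgebra (hB : LeibnizId B) : LieSubalgebra F (Module.End F L) :=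
  { LinearMap.range B with
    lie_mem' := by
      rintro _ _ ⟨a, rfl⟩ ⟨b, rfl⟩
      exact ⟨B a b, (hB.lie_apply_eq a b).symm⟩ }

lemma LeibnizId.leibLCS_le_lowerCentralSeries (hB : LeibnizId B) (n : ℕ) :
    leibLCS B n ≤ (LieModule.lowerCentralSeries F hB.leftMulLieSubalgebra L n : Submodule F L) := by
  induction n with
  | zero => simp [leibLCS]
  | succ n ih =>
    rw [leibLCS, lbrk, Submodule.span_le]
    rintro _ ⟨s, -, t, ht, rfl⟩
    rw [SetLike.mem_coe, LieSubmodule.mem_toSubmodule, LieModule.lowerCentralSeries_succ]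
    exact LieSubmodule.lie_mem_lie (LieSubmodule.mem_top (⟨B s, s, rfl⟩ : hB.leftMulLieSubalgebra))
      (ih ht)

theorem LeibnizId.leibIsNilpotent_of_forall_isNilpotent [FiniteDimensional F L] (hB : LeibnizId B)
    (hnil : ∀ x : L, IsNilpotent (B x)) : LeibIsNilpotent B := by
  have hEngel : LieModule.IsNilpotent hB.leftMulLieSubalgebra L :=
    LieAlgebra.isEngelian_of_isNoetherian L fun ⟨_, a, rfl⟩ => hnil a
  obtain ⟨n, hn⟩ := (LieModule.isNilpotent_iff F hB.leftMulLieSubalgebra L).mp hEngel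
  exact ⟨n, le_bot_iff.mp (by simpa [hn] using hB.leibLCS_le_lowerCentralSeries n)⟩

end Engel

/-- in a finite-dimensional minimal nonnilpotent Leibniz algebra there exist
`x` and linearly independent `a₀, …, a_k` with `[x,aᵢ] = a_{i+1}` for `i < k`,
`[x,a_k] = c₀a₀ + ⋯ + c_k a_k` with `c₀ ≠ 0`, and
`p(λ) = λ^{k+1} − c_kλ^k − ⋯ − c₀` irreducible. -/
theorem stmt11 {F L : Type*} [Field F] [AddCommGroup L] [Module F L] [FiniteDimensional F L]
    (B : L →ₗ[F] L →ₗ[F] L) (hB : LeibnizId B) (hmin : MinNonnilpotent B) :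
    ∃ (k : ℕ) (x : L) (a : ℕ → L) (c : ℕ → F),
      LinearIndependent F (fun i : Fin (k + 1) => a i) ∧
      (∀ i < k, B x (a i) = a (i + 1)) ∧
      (B x (a k) = ∑ i ∈ Finset.range (k + 1), c i • a i) ∧
      c 0 ≠ 0 ∧
      Irreducible
        ((Polynomial.X ^ (k + 1)
          - ∑ i ∈ Finset.range (k + 1), Polynomial.C (c i) * Polynomial.X ^ i :
            Polynomial F)) := by
  obtain ⟨x, hx⟩ : ∃ x, ¬ IsNilpotent (B x) := by
    by_contra! h
    exact hmin.1 (hB.leibIsNilpotent_of_forall_isNilpotent h)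
  obtain ⟨k, v, c, hli, hrel, hc0, hirr⟩ :=
    Module.End.exists_linearIndependent_pow_apply_of_not_isNilpotent hx
  refine ⟨k, x, fun i => (B x ^ i) v, c, hli, fun i _ => ?_, ?_, hc0, hirr⟩
  · simp only [pow_succ', Module.End.mul_apply]
  · simpa only [pow_succ', Module.End.mul_apply] using hrel
end
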